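/- Let b = (b_k)_{k≥1} be non-negative reals such that Σ_{k≥1} b_k e^{−kα} converges for every α > 0. Then for every α > 0 and every real u: log f_b(e^{−α}) − Re(log f_b(e^{−α+2πiu})) = (1/2) Σ_{k≥1} b_k log(1 + 4 e^{−kα} sin²(πku)/(1 − e^{−kα})²) ≥ (log 5 / 2) Σ_{k≥1} b_k e^{−kα} sin²(πku), where log f_b(x) = −Σ_{k≥1} b_k log(1 − x^k) (principal branch). -/

import Mathlib

open Filter Topology Asymptotics MeasureTheory Real

noncomputable section

/-- `F_b(x) = -∑_{k≥1} b_k log(1 - x^k)` (so that `f_b = exp F_b`). -/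
def Fb (b : ℕ → ℝ) (x : ℝ) : ℝ := -∑' k : ℕ, b (k + 1) * Real.log (1 - x ^ (k + 1))

/-- Complex version of `log f_b` (principal branch). -/
def FbC (b : ℕ → ℝ) (x : ℂ) : ℂ := -∑' k : ℕ, (b (k + 1) : ℂ) * Complex.log (1 - x ^ (k + 1))

/-- `f_b(x) = ∏_{k≥1} (1 - x^k)^{-b_k}`. -/
def fb (b : ℕ → ℝ) (x : ℝ) : ℝ := Real.exp (Fb b x)

/-- Complex version of `f_b`. -/
def fbC (b : ℕ → ℝ) (x : ℂ) : ℂ := Complex.exp (FbC b x)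

/-- `F_{m,b}(x) = -∑_{k=1}^m b_k log(1 - x^k)`. -/
def Fmb (b : ℕ → ℝ) (m : ℕ) (x : ℝ) : ℝ := -∑ k ∈ Finset.Icc 1 m, b k * Real.log (1 - x ^ k)

/-- `f_{m,b}(x) = ∏_{k=1}^m (1 - x^k)^{-b_k}`. -/
def fmb (b : ℕ → ℝ) (m : ℕ) (x : ℝ) : ℝ := Real.exp (Fmb b m x)

/-- `𝒜_b(r) = r F_b'(r)`. -/
def Abf (b : ℕ → ℝ) (r : ℝ) : ℝ := r * deriv (Fb b) r

/-- `ℬ_b(r) = r² F_b''(r) + r F_b'(r)`. -/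
def Bbf (b : ℕ → ℝ) (r : ℝ) : ℝ :=
  r ^ 2 * iteratedDeriv 2 (Fb b) r + r * deriv (Fb b) r

/-- Meinardus condition (M1): the Dirichlet series `D(s) = ∑_{k≥1} b_k k^{-s}` converges for
`Re s > ρ` and `Dc` is its analytic continuation to `{Re s ≥ -C₀}`, analytic there except for a
simple pole at `s = ρ` with residue `A > 0`. -/
def M1 (b : ℕ → ℝ) (ρ C₀ A : ℝ) (Dc : ℂ → ℂ) : Prop :=
  0 < ρ ∧ 0 < C₀ ∧ C₀ < 1 ∧ 0 < A ∧
  (∀ s : ℂ, ρ < s.re →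
    HasSum (fun k : ℕ => (b (k + 1) : ℂ) * ((k + 1 : ℕ) : ℂ) ^ (-s)) (Dc s)) ∧
  (∀ s : ℂ, -C₀ ≤ s.re → s ≠ (ρ : ℂ) → DifferentiableAt ℂ Dc s) ∧
  (∃ φ : ℂ → ℂ, (∀ s : ℂ, -C₀ ≤ s.re → DifferentiableAt ℂ φ s) ∧
    ∀ s : ℂ, -C₀ ≤ s.re → s ≠ (ρ : ℂ) → Dc s = (A : ℂ) / (s - (ρ : ℂ)) + φ s)

/-- Meinardus condition (M2): the continuation `Dc` is of finite order `C₁` in `{Re s ≥ -C₀}`,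
i.e. `Dc s = O(|Im s|^{C₁})` as `|Im s| → ∞`, uniformly in `Re s ≥ -C₀`. -/
def M2 (C₀ C₁ : ℝ) (Dc : ℂ → ℂ) : Prop :=
  0 < C₁ ∧ ∃ K y₀ : ℝ, ∀ s : ℂ, -C₀ ≤ s.re → y₀ ≤ |s.im| → ‖Dc s‖ ≤ K * |s.im| ^ C₁

/-- Meinardus condition (M3): `∑_{k≥1} b_k e^{-kα} sin²(πku) ≥ C₂ α^{-ε}` for all small `α > 0`
and all `u` with `α/(2π) < |u| ≤ 1/2`. -/
def M3 (b : ℕ → ℝ) : Prop :=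
  ∃ ε C₂ : ℝ, 0 < ε ∧ 0 < C₂ ∧ ∃ α₀ : ℝ, 0 < α₀ ∧ ∀ α : ℝ, 0 < α → α ≤ α₀ →
    ∀ u : ℝ, α / (2 * π) < |u| → |u| ≤ 1 / 2 →
      C₂ * α ^ (-ε) ≤
        ∑' k : ℕ, b (k + 1) * Real.exp (-((k : ℝ) + 1) * α) * Real.sin (π * ((k : ℝ) + 1) * u) ^ 2

/-- `h = A Γ(ρ+1) ζ(ρ+1)`. -/
def hMein (ρ A : ℝ) : ℝ := A * Real.Gamma (ρ + 1) * (riemannZeta ((ρ : ℂ) + 1)).re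

/-- The normalizing constant `a(n) = (A Γ(ρ+1) ζ(ρ+1) / n)^{1/(ρ+1)}`. -/
def aM (ρ A : ℝ) (n : ℕ) : ℝ := (hMein ρ A / n) ^ ((1 : ℝ) / (ρ + 1))


/-! Put `q = e^{-α}` and `z = e^{-α+2πiu}`. Since `|1 - z^k|² = (1 - q^k)² + 4 q^k sin²(πku)`, the
real part `log |1 - z^k|` of `log (1 - z^k)` exceeds `log (1 - q^k)` by
`½ log (1 + 4 q^k sin²(πku) / (1 - q^k)²)`; all series converge absolutely by comparison with
`∑ b_k q^k`, because `|log (1 - w)| ≤ |w| / (1 - |w|)`. The lower bound holds termwise: `log` is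
concave, so `log (1 + 4x) ≥ x log 5` on `[0, 1]`, and `(1 - q^k)² ≤ 1`. -/

namespace Complex

lemma norm_log_one_sub_le {w : ℂ} (hw : ‖w‖ < 1) : ‖log (1 - w)‖ ≤ ‖w‖ / (1 - ‖w‖) := by
  have h := norm_log_one_add_le (z := -w) (by rwa [norm_neg])
  rw [← sub_eq_add_neg, norm_neg] at h
  have h1 : 0 < 1 - ‖w‖ := by linarith
  refine h.trans (le_of_sub_nonneg ?_)
  field_simp
  nlinarith [norm_nonneg w]

lemma summable_ofReal_mul_log_one_sub {ι : Type*} {b : ι → ℝ} {w : ι → ℂ} {q : ℝ} (hq : q < 1)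
    (hw : ∀ k, ‖w k‖ ≤ q) (hbw : Summable fun k => |b k| * ‖w k‖) :
    Summable fun k => (b k : ℂ) * log (1 - w k) := by
  refine Summable.of_norm_bounded (hbw.mul_left (1 - q)⁻¹) fun k => ?_
  have hwk : ‖w k‖ < 1 := (hw k).trans_lt hq
  calc ‖(b k : ℂ) * log (1 - w k)‖ = |b k| * ‖log (1 - w k)‖ := by
        rw [norm_mul, norm_real, Real.norm_eq_abs]
    _ ≤ |b k| * (‖w k‖ / (1 - q)) := by
      refine mul_le_mul_of_nonneg_left ((norm_log_one_sub_le hwk).trans ?_) (abs_nonneg _)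
      exact div_le_div_of_nonneg_left (norm_nonneg _) (by linarith) (by linarith [hw k])
    _ = (1 - q)⁻¹ * (|b k| * ‖w k‖) := by ring

lemma hasSum_mul_log_norm_one_sub {ι : Type*} {b : ι → ℝ} {w : ι → ℂ} {q : ℝ} (hq : q < 1)
    (hw : ∀ k, ‖w k‖ ≤ q) (hbw : Summable fun k => |b k| * ‖w k‖) :
    HasSum (fun k => b k * Real.log ‖1 - w k‖) (∑' k, (b k : ℂ) * log (1 - w k)).re := by
  simpa only [re_ofReal_mul, log_re] using
    hasSum_re (summable_ofReal_mul_log_one_sub hq hw hbw).hasSum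

lemma normSq_one_sub_exp (x θ : ℝ) :
    normSq (1 - exp (x + 2 * θ * I)) = (1 - Real.exp x) ^ 2 + 4 * Real.exp x * Real.sin θ ^ 2 := by
  rw [show (x : ℂ) + 2 * θ * I = x + ((2 * θ : ℝ) : ℂ) * I by push_cast; ring, exp_add_mul_I,
    ← ofReal_exp, ← ofReal_cos, ← ofReal_sin, normSq_apply]
  simp only [sub_re, sub_im, one_re, one_im, mul_re, mul_im, add_re, add_im, ofReal_re,
    ofReal_im, I_re, I_im]
  rw [Real.cos_two_mul, Real.sin_two_mul]
  linear_combination (4 * Real.exp x ^ 2 * Real.cos θ ^ 2 - 4 * Real.exp x) *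
    Real.sin_sq_add_cos_sq θ

lemma log_norm_one_sub_exp_sub_log {x : ℝ} (hx : x < 0) (θ : ℝ) :
    2 * (Real.log ‖1 - exp (x + 2 * θ * I)‖ - Real.log (1 - Real.exp x)) =
      Real.log (1 + 4 * Real.exp x * Real.sin θ ^ 2 / (1 - Real.exp x) ^ 2) := by
  have he : 0 < 1 - Real.exp x := by linarith [Real.exp_lt_one_iff.mpr hx]
  have hsplit : normSq (1 - exp (x + 2 * θ * I)) =
      (1 - Real.exp x) ^ 2 * (1 + 4 * Real.exp x * Real.sin θ ^ 2 / (1 - Real.exp x) ^ 2) := by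
    rw [normSq_one_sub_exp]; field_simp
  rw [norm_def, Real.log_sqrt (normSq_nonneg _), hsplit,
    Real.log_mul (by positivity) (by positivity), Real.log_pow]
  push_cast
  ring

end Complex

lemma Real.log_five_mul_le_log_one_add {x : ℝ} (h0 : 0 ≤ x) (h1 : x ≤ 1) :
    Real.log 5 * x ≤ Real.log (1 + 4 * x) := by
  have h := strictConcaveOn_log_Ioi.concaveOn.2 (Set.mem_Ioi.mpr one_pos)
    (Set.mem_Ioi.mpr (by norm_num : (0:ℝ) < 5)) (by linarith : 0 ≤ 1 - x) h0 (by ring)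
  simp only [smul_eq_mul, Real.log_one] at h
  rw [show (1 - x) * 1 + x * 5 = 1 + 4 * x by ring] at h
  linarith

lemma Real.log_five_mul_le_log_one_add_div {q t : ℝ} (hq0 : 0 ≤ q) (hq1 : q < 1) (ht0 : 0 ≤ t)
    (ht1 : t ≤ 1) : Real.log 5 * (q * t) ≤ Real.log (1 + 4 * q * t / (1 - q) ^ 2) := by
  have hqt : 0 ≤ q * t := mul_nonneg hq0 ht0
  calc Real.log 5 * (q * t) ≤ Real.log (1 + 4 * (q * t)) :=
        Real.log_five_mul_le_log_one_add hqt (by nlinarith)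
    _ ≤ Real.log (1 + 4 * q * t / (1 - q) ^ 2) := by
      refine Real.log_le_log (by positivity) ?_
      have h1q : (1 - q) ^ 2 ≤ 1 := by nlinarith
      rw [← mul_assoc]
      linarith [le_div_self (by positivity : 0 ≤ 4 * q * t) (by nlinarith) h1q]

lemma hasSum_neg_re_FbC {b : ℕ → ℝ} {z : ℂ} (hz : ‖z‖ < 1)
    (hbz : Summable fun k => |b (k + 1)| * ‖z‖ ^ (k + 1)) :
    HasSum (fun k => b (k + 1) * Real.log ‖1 - z ^ (k + 1)‖) (-(FbC b z).re) := by
  have hpow : ∀ k : ℕ, ‖z ^ (k + 1)‖ ≤ ‖z‖ := fun k => by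
    rw [norm_pow]; exact pow_le_of_le_one (norm_nonneg z) hz.le k.succ_ne_zero
  simpa [FbC] using Complex.hasSum_mul_log_norm_one_sub (b := fun k => b (k + 1))
    (w := fun k => z ^ (k + 1)) hz hpow (by simpa only [norm_pow] using hbz)

lemma hasSum_neg_Fb {b : ℕ → ℝ} {x : ℝ} (hx : |x| < 1)
    (hbx : Summable fun k => |b (k + 1)| * |x| ^ (k + 1)) :
    HasSum (fun k => b (k + 1) * Real.log (1 - x ^ (k + 1))) (-Fb b x) := by
  have h := hasSum_neg_re_FbC (b := b) (z := x) (by rwa [Complex.norm_real, Real.norm_eq_abs])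
    (by simpa only [Complex.norm_real, Real.norm_eq_abs] using hbx)
  have hs : Summable fun k => b (k + 1) * Real.log (1 - x ^ (k + 1)) :=
    h.summable.congr fun k => by
      have hxk : x ^ (k + 1) ≤ 1 :=
        (le_abs_self _).trans (abs_pow x (k + 1) ▸ pow_le_one₀ (abs_nonneg x) hx.le)
      rw [← Complex.ofReal_pow, ← Complex.ofReal_one, ← Complex.ofReal_sub, Complex.norm_real,
        Real.norm_of_nonneg (by linarith)]
  simpa [Fb] using hs.hasSum

lemma log_norm_one_sub_exp_pow_sub_log {α : ℝ} (hα : 0 < α) (u : ℝ) (k : ℕ) :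
    2 * (Real.log ‖1 - Complex.exp (-(α : ℂ) + 2 * (π : ℂ) * Complex.I * (u : ℂ)) ^ (k + 1)‖
        - Real.log (1 - Real.exp (-α) ^ (k + 1))) =
      Real.log (1 + 4 * Real.exp (-((k : ℝ) + 1) * α) *
        Real.sin (π * ((k : ℝ) + 1) * u) ^ 2 / (1 - Real.exp (-((k : ℝ) + 1) * α)) ^ 2) := by
  have hzpow : Complex.exp (-(α : ℂ) + 2 * (π : ℂ) * Complex.I * (u : ℂ)) ^ (k + 1) =
      Complex.exp (↑(-((k : ℝ) + 1) * α) + 2 * ↑(π * ((k : ℝ) + 1) * u) * Complex.I) := by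
    rw [← Complex.exp_nat_mul]; push_cast; ring_nf
  have hqpow : Real.exp (-α) ^ (k + 1) = Real.exp (-((k : ℝ) + 1) * α) := by
    rw [← Real.exp_nat_mul]; push_cast; ring_nf
  rw [hzpow, hqpow, Complex.log_norm_one_sub_exp_sub_log]
  nlinarith [(k.cast_nonneg : (0 : ℝ) ≤ k)]

theorem statement13 (b : ℕ → ℝ) (hb : ∀ k, 0 ≤ b k)
    (hsum : ∀ α : ℝ, 0 < α →
      Summable fun k : ℕ => b (k + 1) * Real.exp (-((k : ℝ) + 1) * α)) :
    ∀ α : ℝ, 0 < α → ∀ u : ℝ,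
      (Fb b (Real.exp (-α))
          - (FbC b (Complex.exp (-(α : ℂ) + 2 * (π : ℂ) * Complex.I * (u : ℂ)))).re
        = (1 / 2) * ∑' k : ℕ, b (k + 1) *
            Real.log (1 + 4 * Real.exp (-((k : ℝ) + 1) * α) * Real.sin (π * ((k : ℝ) + 1) * u) ^ 2
              / (1 - Real.exp (-((k : ℝ) + 1) * α)) ^ 2)) ∧
      ((Real.log 5 / 2) * ∑' k : ℕ, b (k + 1) * Real.exp (-((k : ℝ) + 1) * α) *
            Real.sin (π * ((k : ℝ) + 1) * u) ^ 2
        ≤ Fb b (Real.exp (-α))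
          - (FbC b (Complex.exp (-(α : ℂ) + 2 * (π : ℂ) * Complex.I * (u : ℂ)))).re) := by
  intro α hα u
  have hq : |Real.exp (-α)| < 1 := by
    rw [abs_of_pos (Real.exp_pos _)]; exact Real.exp_lt_one_iff.mpr (by linarith)
  have hz : ‖Complex.exp (-(α : ℂ) + 2 * (π : ℂ) * Complex.I * (u : ℂ))‖ = |Real.exp (-α)| := by
    rw [Complex.norm_exp, abs_of_pos (Real.exp_pos _)]; simp
  have hbq : Summable fun k => |b (k + 1)| * |Real.exp (-α)| ^ (k + 1) := by
    refine (hsum α hα).congr fun k => ?_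
    rw [abs_of_nonneg (hb _), abs_of_pos (Real.exp_pos _), ← Real.exp_nat_mul]
    push_cast; ring_nf
  have hdiff := ((hasSum_neg_re_FbC (hz ▸ hq) (hz ▸ hbq)).sub (hasSum_neg_Fb hq hbq)).mul_left 2
  simp_rw [← mul_sub, mul_left_comm (2 : ℝ), log_norm_one_sub_exp_pow_sub_log hα] at hdiff
  have hbQ0 : ∀ k : ℕ, 0 ≤ b (k + 1) * Real.exp (-((k : ℝ) + 1) * α) :=
    fun k => mul_nonneg (hb _) (Real.exp_pos _).le
  have hlower : Summable fun k : ℕ => b (k + 1) * Real.exp (-((k : ℝ) + 1) * α) *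
      Real.sin (π * ((k : ℝ) + 1) * u) ^ 2 :=
    (hsum α hα).of_nonneg_of_le (fun k => mul_nonneg (hbQ0 k) (sq_nonneg _))
      (fun k => mul_le_of_le_one_right (hbQ0 k) (Real.sin_sq_le_one _))
  refine ⟨by rw [hdiff.tsum_eq]; ring, ?_⟩
  have h := hasSum_le (fun k => ?_) (hlower.hasSum.mul_left (Real.log 5)) hdiff
  · linarith
  rw [mul_assoc, mul_left_comm]
  exact mul_le_mul_of_nonneg_left (Real.log_five_mul_le_log_one_add_div (Real.exp_pos _).le
    (Real.exp_lt_one_iff.mpr (by nlinarith [(k.cast_nonneg : (0 : ℝ) ≤ k)])) (sq_nonneg _)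
    (Real.sin_sq_le_one _)) (hb _)
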